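/- arXiv:1803.07625 — 2 statements merged into one kernel-verified Lean document; each statement's English description precedes it below -/
import Mathlib

section
/- Let x ∈ ℝⁿ, y ∈ ℝᵐ, u ∈ ℝⁿ, v ∈ ℝᵐ, and set W := xyᵀ, q₁ := (uᵀx + vᵀy)/2, q₂ := (uᵀx − vᵀy)/2. Suppose l₁ ≤ q₁ ≤ u₁ and l₂ ≤ q₂ ≤ u₂ for real numbers l₁, u₁, l₂, u₂. Then the two convex secant inequalities hold: uᵀWv + q₂² ≤ (l₁ + u₁)q₁ − l₁u₁ and −uᵀWv + q₁² ≤ (l₂ + u₂)q₂ − l₂u₂. -/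
open Matrix

/-! Since `uᵀWv = (uᵀx)(vᵀy) = q₁² - q₂²`, each inequality is the secant bound
`q² ≤ (l + u) q - l u` for `q ∈ [l, u]`, i.e. `(u - q)(q - l) ≥ 0`. -/

theorem dotProduct_vecMulVec_mulVec {R n m : Type*} [CommSemiring R] [Fintype n] [Fintype m]
    (u x : n → R) (y v : m → R) :
    u ⬝ᵥ (vecMulVec x y *ᵥ v) = (u ⬝ᵥ x) * (v ⬝ᵥ y) := by
  rw [vecMulVec_mulVec, op_smul_eq_smul, dotProduct_smul, smul_eq_mul, mul_comm,
    dotProduct_comm y v]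

theorem sq_le_secant {R : Type*} [CommRing R] [LinearOrder R] [IsStrictOrderedRing R]
    {l u q : R} (hl : l ≤ q) (hu : q ≤ u) :
    q ^ 2 ≤ (l + u) * q - l * u := by
  linear_combination mul_nonneg (sub_nonneg.2 hu) (sub_nonneg.2 hl)

/-- with `W := xy'`, `q₁ := (u'x + v'y)/2`, `q₂ := (u'x - v'y)/2`,
and bounds `l₁ ≤ q₁ ≤ u₁`, `l₂ ≤ q₂ ≤ u₂`, the two convex secant inequalities hold:
`u'Wv + q₂² ≤ (l₁+u₁)q₁ - l₁u₁` and `-u'Wv + q₁² ≤ (l₂+u₂)q₂ - l₂u₂`. -/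
theorem stmt8 {n m : ℕ}
    (x u : Fin n → ℝ) (y v : Fin m → ℝ)
    (W : Matrix (Fin n) (Fin m) ℝ) (hW : W = vecMulVec x y)
    (q₁ q₂ : ℝ)
    (hq₁ : q₁ = (u ⬝ᵥ x + v ⬝ᵥ y) / 2) (hq₂ : q₂ = (u ⬝ᵥ x - v ⬝ᵥ y) / 2)
    (l₁ u₁ l₂ u₂ : ℝ)
    (h₁l : l₁ ≤ q₁) (h₁u : q₁ ≤ u₁) (h₂l : l₂ ≤ q₂) (h₂u : q₂ ≤ u₂) :
    u ⬝ᵥ (W *ᵥ v) + q₂ ^ 2 ≤ (l₁ + u₁) * q₁ - l₁ * u₁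
      ∧ -(u ⬝ᵥ (W *ᵥ v)) + q₁ ^ 2 ≤ (l₂ + u₂) * q₂ - l₂ * u₂ := by
  have hsplit : u ⬝ᵥ (W *ᵥ v) = q₁ ^ 2 - q₂ ^ 2 := by
    rw [hW, dotProduct_vecMulVec_mulVec, hq₁, hq₂]
    ring
  exact ⟨by linarith [sq_le_secant h₁l h₁u], by linarith [sq_le_secant h₂l h₂u]⟩
end

section
/- Let a₁, b₁, a₂, b₂ ∈ ℝ with a₁ < b₁, a₂ < b₂, and b₁ − a₁ ≠ b₂ − a₂. Then neither of the two inequalities dominates the other: there exist p₁ ∈ [a₁, b₁], p₂ ∈ [a₂, b₂] with RHS_Sec(p₁, p₂) < RHS_Mc(p₁, p₂) (for example (p₁, p₂) = (a₁, b₂)), and there exist p₁ ∈ [a₁, b₁], p₂ ∈ [a₂, b₂] with RHS_Sec(p₁, p₂) > RHS_Mc(p₁, p₂) (for example the midpoints p₁ = (a₁+b₁)/2, p₂ = (a₂+b₂)/2). -/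
/-- Right-hand side of the averaged McCormick upper inequality for `p₁p₂`
over the box `[a₁,b₁] × [a₂,b₂]`. -/
noncomputable def RHSMc (a₁ b₁ a₂ b₂ p₁ p₂ : ℝ) : ℝ :=
  ((a₂ + b₂) / 2) * p₁ + ((a₁ + b₁) / 2) * p₂ - (a₁ * b₂ + a₂ * b₁) / 2

/-- Right-hand side of the secant-relaxed inequality obtained by replacing the
concave term `-q₁²` (with `q₁ = (p₁+p₂)/2`) by its secant. -/
noncomputable def RHSSec (a₁ b₁ a₂ b₂ p₁ p₂ : ℝ) : ℝ :=
  ((a₁ + b₁ + a₂ + b₂) / 4) * p₁ + ((a₁ + b₁ + a₂ + b₂) / 4) * p₂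
    - (a₁ * b₂ + a₂ * b₁ + a₁ * b₁ + a₂ * b₂) / 4 - ((p₁ - p₂) / 2) ^ 2

/-! The gap `RHSMc - RHSSec` equals `((δ₁ - δ₂)/2)² - ((w₁ - w₂)/4)²`, where `δᵢ` is the
offset of `pᵢ` from the midpoint of `[aᵢ, bᵢ]` and `wᵢ = bᵢ - aᵢ`. At the midpoints it is
`-((w₁ - w₂)/4)² < 0` because the widths differ, and at the corner `(a₁, b₂)` it is
`w₁ w₂ / 4 > 0`. -/

theorem RHSMc_sub_RHSSec (a₁ b₁ a₂ b₂ p₁ p₂ : ℝ) :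
    RHSMc a₁ b₁ a₂ b₂ p₁ p₂ - RHSSec a₁ b₁ a₂ b₂ p₁ p₂ =
      (((p₁ - (a₁ + b₁) / 2) - (p₂ - (a₂ + b₂) / 2)) / 2) ^ 2
        - (((b₁ - a₁) - (b₂ - a₂)) / 4) ^ 2 := by
  unfold RHSMc RHSSec
  ring

theorem RHSMc_sub_RHSSec_corner (a₁ b₁ a₂ b₂ : ℝ) :
    RHSMc a₁ b₁ a₂ b₂ a₁ b₂ - RHSSec a₁ b₁ a₂ b₂ a₁ b₂ = (b₁ - a₁) * (b₂ - a₂) / 4 := by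
  rw [RHSMc_sub_RHSSec]
  ring

theorem RHSMc_sub_RHSSec_midpoint (a₁ b₁ a₂ b₂ : ℝ) :
    RHSMc a₁ b₁ a₂ b₂ ((a₁ + b₁) / 2) ((a₂ + b₂) / 2)
        - RHSSec a₁ b₁ a₂ b₂ ((a₁ + b₁) / 2) ((a₂ + b₂) / 2) =
      -(((b₁ - a₁) - (b₂ - a₂)) / 4) ^ 2 := by
  rw [RHSMc_sub_RHSSec]
  ring

theorem midpoint_mem_Icc {a b : ℝ} (h : a ≤ b) : (a + b) / 2 ∈ Set.Icc a b :=
  ⟨by linarith, by linarith⟩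

/-- when the box widths differ (and both boxes are nondegenerate),
neither inequality dominates the other. -/
theorem stmt12 (a₁ b₁ a₂ b₂ : ℝ) (h₁ : a₁ < b₁) (h₂ : a₂ < b₂)
    (hw : b₁ - a₁ ≠ b₂ - a₂) :
    (∃ p₁ ∈ Set.Icc a₁ b₁, ∃ p₂ ∈ Set.Icc a₂ b₂,
        RHSSec a₁ b₁ a₂ b₂ p₁ p₂ < RHSMc a₁ b₁ a₂ b₂ p₁ p₂)
      ∧ (∃ p₁ ∈ Set.Icc a₁ b₁, ∃ p₂ ∈ Set.Icc a₂ b₂,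
        RHSSec a₁ b₁ a₂ b₂ p₁ p₂ > RHSMc a₁ b₁ a₂ b₂ p₁ p₂) := by
  refine ⟨⟨a₁, Set.left_mem_Icc.mpr h₁.le, b₂, Set.right_mem_Icc.mpr h₂.le, ?_⟩,
    ⟨_, midpoint_mem_Icc h₁.le, _, midpoint_mem_Icc h₂.le, ?_⟩⟩
  · have hgap := RHSMc_sub_RHSSec_corner a₁ b₁ a₂ b₂
    have hpos : 0 < (b₁ - a₁) * (b₂ - a₂) / 4 := by
      have := mul_pos (sub_pos.mpr h₁) (sub_pos.mpr h₂)
      positivity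
    linarith
  · have hgap := RHSMc_sub_RHSSec_midpoint a₁ b₁ a₂ b₂
    have hpos : 0 < (((b₁ - a₁) - (b₂ - a₂)) / 4) ^ 2 := by
      have := sub_ne_zero.mpr hw
      positivity
    linarith
end
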